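/- Let Ω ⊆ ℝⁿ be an open convex set, I = {1, …, m}, and for each i ∈ I let f_i : ℝⁿ → ℝ be continuously differentiable on Ω with ∇f_i Lipschitz on Ω with constant L_i. Define f(p) := max_{i ∈ I} f_i(p). Assume inf_{p ∈ ℝⁿ} f(p) > −∞, there is q with inf f < f(q) and {p : f(p) ≤ f(q)} ⊆ Ω, and let c ∈ (inf f, f(q)). Suppose there exists δ > 0 such that for every p ∈ {p : f(p) ≤ f(q)} \ {p : f(p) ≤ c} and every y ∈ convexHull{ ∇f_i(p) : i ∈ I(p) }, one has ‖y‖ > δ. Let λ̄ > 0, let (λ_k) satisfy max_{i ∈ I} L_i < λ_k ≤ λ̄ for all k, let p⁰ ∈ {p : f(p) ≤ f(q)}, and let (p^k) be a sequence such that for every k, p^{k+1} is a global minimizer over ℝⁿ of p ↦ f(p) + (λ_k/2)·‖p − p^k‖². Then after finitely many steps the iterates enter the sublevel set {p : f(p) ≤ c}, i.e. there exists k₀ with f(p^k) ≤ c for all k ≥ k₀. -/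

import Mathlib

/-!
Fermat's rule for a pointwise maximum of differentiable functions: at a local minimiser, `0` lies
in the convex hull of the active gradients (otherwise a separating direction decreases every
active function to first order, while the inactive ones stay below the maximum by continuity).
Applied to the proximal subproblem it puts `λ_k (p^k - p^{k+1})` in the convex hull of the active
gradients at `p^{k+1}`, so while `F (p^{k+1}) > c` the step has length `> δ / λ_k` and the
proximal inequality forces `F` to drop by at least `δ² / (2 λ̄)`. As `F` is bounded below, this
happens only finitely often.
-/

open Filter Topology Finset Pointwise

lemma HasDerivAt.eventually_nhdsGT_lt {ψ : ℝ → ℝ} {ψ' x : ℝ} (h : HasDerivAt ψ ψ' x)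
    (hψ' : ψ' < 0) : ∀ᶠ t in 𝓝[>] x, ψ t < ψ x := by
  have hslope : ∀ᶠ t in 𝓝[>] x, slope ψ x t < 0 :=
    ((hasDerivAt_iff_tendsto_slope.mp h).mono_left (nhdsGT_le_nhdsNE x)).eventually_lt_const hψ'
  filter_upwards [hslope, self_mem_nhdsWithin] with t ht (hxt : x < t)
  rw [slope_def_field, div_neg_iff] at ht
  rcases ht with ⟨-, hneg⟩ | ⟨hneg, -⟩ <;> linarith

lemma nonneg_of_norm_sub_le_mul_norm_sub {E F : Type*} [NormedAddCommGroup E]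
    [NormedAddCommGroup F] {g : E → F} {L : ℝ} {x y : E} (hxy : x ≠ y)
    (h : ‖g x - g y‖ ≤ L * ‖x - y‖) : 0 ≤ L :=
  nonneg_of_mul_nonneg_left ((norm_nonneg _).trans h) (norm_pos_iff.2 (sub_ne_zero.2 hxy))

section Fermat

variable {E : Type*} [NormedAddCommGroup E] [InnerProductSpace ℝ E] [CompleteSpace E]
  {ι : Type*} [Fintype ι] [Nonempty ι]

theorem IsLocalMin.zero_mem_convexHull_active_gradients {h : ι → E → ℝ} {G : ι → E} {x : E}
    (hG : ∀ i, HasGradientAt (h i) (G i) x)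
    (hmin : IsLocalMin (fun y => univ.sup' univ_nonempty fun i => h i y) x) :
    (0 : E) ∈ convexHull ℝ
      {w | ∃ i, h i x = univ.sup' univ_nonempty (fun i => h i x) ∧ G i = w} := by
  set M := univ.sup' univ_nonempty fun i => h i x
  set S := {w | ∃ i, h i x = M ∧ G i = w}
  by_contra h0
  have hS : S.Finite := (Set.finite_range G).subset (by rintro _ ⟨i, -, rfl⟩; exact ⟨i, rfl⟩)
  obtain ⟨φ, u, hφS, hu⟩ :=
    geometric_hahn_banach_closed_point (convex_convexHull ℝ S) (hS.isClosed_convexHull ℝ) h0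
  set d := (InnerProductSpace.toDual ℝ E).symm φ
  have hdescent : ∀ i, h i x = M → inner ℝ (G i) d < 0 := fun i hi => by
    rw [real_inner_comm, InnerProductSpace.toDual_symm_apply]
    have := hφS _ (subset_convexHull ℝ S ⟨i, hi, rfl⟩)
    rw [map_zero] at hu
    linarith
  have hline : ∀ i, HasDerivAt (fun t : ℝ => h i (x + t • d)) (inner ℝ (G i) d) 0 := fun i => by
    have hpath : HasDerivAt (fun t : ℝ => x + t • d) d 0 := by
      simpa using ((hasDerivAt_id (0 : ℝ)).smul_const d).const_add x
    have := (hG i).hasFDerivAt.comp_hasDerivAt_of_eq 0 hpath (by simp)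
    rw [InnerProductSpace.toDual_apply_apply] at this
    exact this
  have hbelow : ∀ i, ∀ᶠ t in 𝓝[>] (0 : ℝ), h i (x + t • d) < M := fun i => by
    rcases (le_sup' (fun i => h i x) (mem_univ i)).eq_or_lt with hact | hinact
    · simpa [hact] using (hline i).eventually_nhdsGT_lt (hdescent i hact)
    · exact ((hline i).continuousAt.eventually_lt_const (by simpa using hinact)).filter_mono
        nhdsWithin_le_nhds
  have hnear : Tendsto (fun t : ℝ => x + t • d) (𝓝[>] 0) (𝓝 x) := by
    have : Continuous fun t : ℝ => x + t • d := by fun_prop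
    simpa using this.tendsto' 0 x (by simp) |>.mono_left nhdsWithin_le_nhds
  obtain ⟨t, hlt, hle⟩ := ((eventually_all.2 hbelow).and (hnear.eventually hmin)).exists
  exact (hle.trans_lt ((sup'_lt_iff _).2 fun i _ => hlt i)).false

lemma HasGradientAt.add_half_mul_norm_sub_sq {f : E → ℝ} {g x : E} (hf : HasGradientAt f g x)
    (lam : ℝ) (a : E) :
    HasGradientAt (fun y => f y + lam / 2 * ‖y - a‖ ^ 2) (g + lam • (x - a)) x := by
  have hsq : HasFDerivAt (fun y => lam / 2 * ‖y - a‖ ^ 2)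
      (InnerProductSpace.toDual ℝ E (lam • (x - a))) x :=
    (((hasFDerivAt_id x).sub_const a).norm_sq.const_mul (lam / 2)).congr_fderiv <| by
      ext v
      simp
      ring
  rw [hasGradientAt_iff_hasFDerivAt, map_add] at *
  exact hf.add hsq

theorem prox_smul_sub_mem_convexHull_active_gradients {f : ι → E → ℝ} {g : ι → E} {F : E → ℝ}
    (hF : ∀ x, F x = univ.sup' univ_nonempty fun i => f i x) {lam : ℝ} {a x : E}
    (hg : ∀ i, HasGradientAt (f i) (g i) x)
    (hmin : ∀ y, F x + lam / 2 * ‖x - a‖ ^ 2 ≤ F y + lam / 2 * ‖y - a‖ ^ 2) :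
    lam • (a - x) ∈ convexHull ℝ {w | ∃ i, f i x = F x ∧ g i = w} := by
  have hsup : ∀ y, (univ.sup' univ_nonempty fun i => f i y + lam / 2 * ‖y - a‖ ^ 2) =
      F y + lam / 2 * ‖y - a‖ ^ 2 := fun y => by rw [hF, sup'_add]
  have h0 := IsLocalMin.zero_mem_convexHull_active_gradients
    (fun i => (hg i).add_half_mul_norm_sub_sq lam a)
    (Eventually.of_forall fun y => by simp only [hsup]; exact hmin y)
  have hset : {w | ∃ i, f i x + lam / 2 * ‖x - a‖ ^ 2 =
        (univ.sup' univ_nonempty fun i => f i x + lam / 2 * ‖x - a‖ ^ 2) ∧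
        g i + lam • (x - a) = w} = lam • (x - a) +ᵥ {w | ∃ i, f i x = F x ∧ g i = w} := by
    ext w
    simp only [hsup, add_left_inj, Set.mem_ofPred_eq, Set.mem_vadd_set, vadd_eq_add]
    constructor
    · rintro ⟨i, hi, rfl⟩; exact ⟨g i, ⟨i, hi, rfl⟩, add_comm _ _⟩
    · rintro ⟨_, ⟨i, hi, rfl⟩, rfl⟩; exact ⟨i, hi, add_comm _ _⟩
  rw [hset, convexHull_vadd, Set.mem_vadd_set] at h0
  obtain ⟨w, hw, hw0⟩ := h0
  convert hw using 1
  rw [vadd_eq_add, add_eq_zero_iff_neg_eq] at hw0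
  rw [← hw0, ← smul_neg, neg_sub]

end Fermat

lemma sq_div_two_mul_le_half_mul_sq {δ lam Λ r : ℝ} (hδ : 0 ≤ δ) (hlam : 0 < lam)
    (hlamΛ : lam ≤ Λ) (hr : δ < lam * r) : δ ^ 2 / (2 * Λ) ≤ lam / 2 * r ^ 2 :=
  calc δ ^ 2 / (2 * Λ) ≤ δ ^ 2 / (2 * lam) := by gcongr
    _ ≤ (lam * r) ^ 2 / (2 * lam) := by gcongr
    _ = lam / 2 * r ^ 2 := by field_simp

lemma exists_forall_ge_le_of_decrease {a : ℕ → ℝ} {b c η : ℝ} (hη : 0 < η)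
    (hb : ∀ k, b ≤ a k) (ha : Antitone a) (hdec : ∀ k, c < a (k + 1) → a (k + 1) + η ≤ a k) :
    ∃ k₀, ∀ k ≥ k₀, a k ≤ c := by
  by_contra! hcon
  have habove : ∀ k, c < a k := fun k => by
    obtain ⟨m, hkm, hm⟩ := hcon k
    exact hm.trans_le (ha hkm)
  have hsum : ∀ k : ℕ, a k + k * η ≤ a 0 := fun k => by
    induction k with
    | zero => simp
    | succ k ih => push_cast; linarith [hdec k (habove (k + 1))]
  obtain ⟨k, hk⟩ := exists_nat_gt ((a 0 - b) / η)
  rw [div_lt_iff₀ hη] at hk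
  linarith [hsum k, hb k]

theorem stmt_8 {n : ℕ} {ι : Type*} [Fintype ι] [Nonempty ι]
    (Ω : Set (EuclideanSpace ℝ (Fin n)))
    (f : ι → EuclideanSpace ℝ (Fin n) → ℝ)
    (g : ι → EuclideanSpace ℝ (Fin n) → EuclideanSpace ℝ (Fin n)) (L : ι → ℝ)
    (hdiff : ∀ i, ∀ x ∈ Ω, HasGradientAt (f i) (g i x) x)
    (hLip : ∀ i, ∀ x ∈ Ω, ∀ y ∈ Ω, ‖g i x - g i y‖ ≤ L i * ‖x - y‖)
    (F : EuclideanSpace ℝ (Fin n) → ℝ)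
    (hF : ∀ x, F x = Finset.univ.sup' Finset.univ_nonempty fun i => f i x)
    (hbdd : BddBelow (Set.range F))
    (q : EuclideanSpace ℝ (Fin n)) (hq1 : ∃ x, F x < F q)
    (hq2 : {x | F x ≤ F q} ⊆ Ω)
    (c : ℝ)
    (δ : ℝ) (hδ : 0 < δ)
    (hsub : ∀ x, F x ≤ F q → ¬ F x ≤ c →
      ∀ y ∈ convexHull ℝ {w | ∃ i, f i x = F x ∧ g i x = w}, δ < ‖y‖)
    (lamUp : ℝ) (lam : ℕ → ℝ)
    (hlam : ∀ k, Finset.univ.sup' Finset.univ_nonempty L < lam k ∧ lam k ≤ lamUp)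
    (p : ℕ → EuclideanSpace ℝ (Fin n)) (hp0 : F (p 0) ≤ F q)
    (hprox : ∀ k, ∀ x, F (p (k + 1)) + lam k / 2 * ‖p (k + 1) - p k‖ ^ 2 ≤
      F x + lam k / 2 * ‖x - p k‖ ^ 2) :
    ∃ k₀ : ℕ, ∀ k ≥ k₀, F (p k) ≤ c := by
  obtain ⟨x₀, hx₀⟩ := hq1
  have hL : ∀ i, 0 ≤ L i := fun i => nonneg_of_norm_sub_le_mul_norm_sub (by rintro rfl; simp at hx₀)
    (hLip i x₀ (hq2 hx₀.le) q (hq2 (le_refl (F q))))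
  have hlam_pos : ∀ k, 0 < lam k := fun k =>
    (hL (Classical.arbitrary ι)).trans_lt ((le_sup' L (mem_univ _)).trans_lt (hlam k).1)
  have hstep : ∀ k, F (p (k + 1)) + lam k / 2 * ‖p (k + 1) - p k‖ ^ 2 ≤ F (p k) := fun k => by
    simpa using hprox k (p k)
  have hanti : Antitone (F ∘ p) := antitone_nat_of_succ_le fun k => by
    show F (p (k + 1)) ≤ F (p k)
    nlinarith [hstep k, hlam_pos k, sq_nonneg ‖p (k + 1) - p k‖]
  have hFq : ∀ k, F (p k) ≤ F q := fun k => (hanti (Nat.zero_le k)).trans hp0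
  obtain ⟨b, hb⟩ := hbdd
  refine exists_forall_ge_le_of_decrease (b := b) (η := δ ^ 2 / (2 * lamUp))
    (by have := (hlam_pos 0).trans_le (hlam 0).2; positivity) (fun k => hb ⟨p k, rfl⟩) hanti
    fun k hk => ?_
  have hmem := prox_smul_sub_mem_convexHull_active_gradients hF
    (fun i => hdiff i _ (hq2 (hFq (k + 1)))) (hprox k)
  have hlong := hsub _ (hFq (k + 1)) (not_le.2 hk) _ hmem
  rw [norm_smul, Real.norm_of_nonneg (hlam_pos k).le, norm_sub_rev] at hlong
  linarith [hstep k, sq_div_two_mul_le_half_mul_sq hδ.le (hlam_pos k) (hlam k).2 hlong]
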